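/- Every element of GSp₄(ℚ) lies in P(ℚ)·wⱼ·P(ℚ) for some j ∈ {1, 2, 3, 4}; that is, GSp₄(ℚ) = P(ℚ)w₁P(ℚ) ∪ P(ℚ)w₂P(ℚ) ∪ P(ℚ)w₃P(ℚ) ∪ P(ℚ)w₄P(ℚ). -/

import Mathlib

/-!
Write `g = [[A, B], [C, D]]`; its double coset is that of `w₁`, `w₂` or `w₄` according as the
lower-left block `C` has rank 0, 1 or 2. The symplectic relation makes `AᵀC` symmetric. If `C` is
invertible, `S = A C⁻¹` is then symmetric, and `w₄ · [[1, -S], [0, 1]] · g` lies in `P`. If `C`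
has rank 1, Levi elements `diag(U⁻ᵀ, U)` and `diag(V, V⁻ᵀ)` of `P` bring `C` to `diag(c, 0)`;
symmetry of `AᵀC` then forces `A₀₁ = 0`, so a unipotent element of `P` clears the first row of
`A`, after which `w₂⁻¹ = w₂ᵀ` moves the element into `P`.
-/

open Matrix

noncomputable section

/-- The 4×4 matrix with 2×2 blocks `[[A, B], [C, D]]`. -/
def blk {R : Type*} (A B C D : Matrix (Fin 2) (Fin 2) R) : Matrix (Fin 4) (Fin 4) R :=
  !![A 0 0, A 0 1, B 0 0, B 0 1;
     A 1 0, A 1 1, B 1 0, B 1 1;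
     C 0 0, C 0 1, D 0 0, D 0 1;
     C 1 0, C 1 1, D 1 0, D 1 1]

/-- `J₂ = [[0, I₂], [−I₂, 0]] ∈ M₄(ℚ)`. -/
def J2 : Matrix (Fin 4) (Fin 4) ℚ := blk 0 1 (-1) 0

/-- Membership in `GSp₄(ℚ) = {g ∈ GL₄(ℚ) : gᵀ J₂ g = ν(g) J₂, ν(g) ∈ ℚˣ}`. -/
def IsGSp4 (g : Matrix (Fin 4) (Fin 4) ℚ) : Prop :=
  IsUnit g ∧ ∃ ν : ℚ, ν ≠ 0 ∧ gᵀ * J2 * g = ν • J2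

/-- The Weyl representatives `w₁ = I₄`, `w₂`, `w₃`, `w₄`. -/
def w1 : Matrix (Fin 4) (Fin 4) ℚ := 1

def w2 : Matrix (Fin 4) (Fin 4) ℚ :=
  !![0, 0, 1, 0;
     0, 1, 0, 0;
     -1, 0, 0, 0;
     0, 0, 0, 1]

def w3 : Matrix (Fin 4) (Fin 4) ℚ :=
  !![1, 0, 0, 0;
     0, 0, 0, 1;
     0, 0, 1, 0;
     0, -1, 0, 0]

def w4 : Matrix (Fin 4) (Fin 4) ℚ :=
  !![0, 0, 1, 0;
     0, 0, 0, 1;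
     1, 0, 0, 0;
     0, 1, 0, 0]

/-- Membership in the Siegel parabolic subgroup `P(ℚ)`: elements of `GSp₄(ℚ)` whose lower-left
2×2 block vanishes. -/
def memP (g : Matrix (Fin 4) (Fin 4) ℚ) : Prop :=
  IsGSp4 g ∧ g 2 0 = 0 ∧ g 2 1 = 0 ∧ g 3 0 = 0 ∧ g 3 1 = 0

section Blocks

variable {R : Type*}

theorem blk_eq_reindex_fromBlocks (A B C D : Matrix (Fin 2) (Fin 2) R) :
    blk A B C D = reindex finSumFinEquiv finSumFinEquiv (fromBlocks A B C D) := by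
  ext i j
  fin_cases i <;> fin_cases j <;> rfl

theorem blk_inj {A B C D A' B' C' D' : Matrix (Fin 2) (Fin 2) R} :
    blk A B C D = blk A' B' C' D' ↔ A = A' ∧ B = B' ∧ C = C' ∧ D = D' := by
  simp only [blk_eq_reindex_fromBlocks, EmbeddingLike.apply_eq_iff_eq, fromBlocks_inj]

theorem exists_eq_blk (g : Matrix (Fin 4) (Fin 4) R) : ∃ A B C D, g = blk A B C D := by
  refine ⟨!![g 0 0, g 0 1; g 1 0, g 1 1], !![g 0 2, g 0 3; g 1 2, g 1 3],
    !![g 2 0, g 2 1; g 3 0, g 3 1], !![g 2 2, g 2 3; g 3 2, g 3 3], ?_⟩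
  ext i j
  fin_cases i <;> fin_cases j <;> rfl

theorem blk_transpose (A B C D : Matrix (Fin 2) (Fin 2) R) :
    (blk A B C D)ᵀ = blk Aᵀ Cᵀ Bᵀ Dᵀ := by
  simp only [blk_eq_reindex_fromBlocks, transpose_reindex, fromBlocks_transpose]

theorem blk_mul [NonUnitalNonAssocSemiring R] (A B C D A' B' C' D' : Matrix (Fin 2) (Fin 2) R) :
    blk A B C D * blk A' B' C' D' =
      blk (A * A' + B * C') (A * B' + B * D') (C * A' + D * C') (C * B' + D * D') := by
  simp only [blk_eq_reindex_fromBlocks, reindex_apply, submatrix_mul_equiv, fromBlocks_multiply]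

theorem blk_one [Zero R] [One R] : blk (1 : Matrix (Fin 2) (Fin 2) R) 0 0 1 = 1 := by
  rw [blk_eq_reindex_fromBlocks, fromBlocks_one, reindex_apply, submatrix_one_equiv]

theorem smul_blk {S : Type*} [SMul S R] (c : S) (A B C D : Matrix (Fin 2) (Fin 2) R) :
    c • blk A B C D = blk (c • A) (c • B) (c • C) (c • D) := by
  simp only [blk_eq_reindex_fromBlocks, ← fromBlocks_smul, reindex_apply]
  rfl

theorem blk_diag_mul_blk_mul_blk_diag [Semiring R] (X Y X' Y' A B C D : Matrix (Fin 2) (Fin 2) R) :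
    blk X 0 0 Y * blk A B C D * blk X' 0 0 Y' =
      blk (X * A * X') (X * B * Y') (Y * C * X') (Y * D * Y') := by
  simp [blk_mul, Matrix.mul_assoc]

end Blocks

theorem det_J2 : J2.det = 1 := by
  simp [J2, blk, det_succ_row_zero, Fin.sum_univ_succ, Fin.succAbove]

theorem transpose_blk_mul_J2_mul_blk (A B C D : Matrix (Fin 2) (Fin 2) ℚ) :
    (blk A B C D)ᵀ * J2 * blk A B C D =
      blk (Aᵀ * C - Cᵀ * A) (Aᵀ * D - Cᵀ * B) (Bᵀ * C - Dᵀ * A) (Bᵀ * D - Dᵀ * B) := by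
  simp only [J2, blk_transpose, blk_mul, Matrix.mul_zero, Matrix.mul_one, Matrix.mul_neg,
    zero_add, add_zero, Matrix.neg_mul]
  rw [blk_inj]
  refine ⟨?_, ?_, ?_, ?_⟩ <;> abel

theorem isGSp4_of_transpose_mul_mul {g : Matrix (Fin 4) (Fin 4) ℚ} {ν : ℚ} (hν : ν ≠ 0)
    (h : gᵀ * J2 * g = ν • J2) : IsGSp4 g := by
  refine ⟨?_, ν, hν, h⟩
  have hdet := congrArg det h
  rw [det_mul, det_mul, det_transpose, det_smul, det_J2] at hdet
  rw [isUnit_iff_isUnit_det, isUnit_iff_ne_zero]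
  intro h0
  exact pow_ne_zero 4 hν (by simpa [h0] using hdet.symm)

theorem IsGSp4.mul {a b : Matrix (Fin 4) (Fin 4) ℚ} (ha : IsGSp4 a) (hb : IsGSp4 b) :
    IsGSp4 (a * b) := by
  obtain ⟨-, νa, hνa, hra⟩ := ha
  obtain ⟨-, νb, hνb, hrb⟩ := hb
  refine isGSp4_of_transpose_mul_mul (mul_ne_zero hνa hνb) ?_
  calc (a * b)ᵀ * J2 * (a * b) = bᵀ * (aᵀ * J2 * a) * b := by
        simp only [transpose_mul, Matrix.mul_assoc]
    _ = (νa * νb) • J2 := by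
        rw [hra, Matrix.mul_smul, Matrix.smul_mul, hrb, smul_smul]

theorem IsGSp4.nonsing_inv {g : Matrix (Fin 4) (Fin 4) ℚ} (h : IsGSp4 g) : IsGSp4 g⁻¹ := by
  obtain ⟨hu, ν, hν, hg⟩ := h
  have hg' : g * g⁻¹ = 1 := mul_nonsing_inv g ((isUnit_iff_isUnit_det g).mp hu)
  refine isGSp4_of_transpose_mul_mul (inv_ne_zero hν) ?_
  calc g⁻¹ᵀ * J2 * g⁻¹ = ν⁻¹ • (g⁻¹ᵀ * (gᵀ * J2 * g) * g⁻¹) := by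
        rw [hg, Matrix.mul_smul, Matrix.smul_mul, smul_smul, inv_mul_cancel₀ hν, one_smul]
    _ = ν⁻¹ • ((g * g⁻¹)ᵀ * J2 * (g * g⁻¹)) := by simp only [transpose_mul, Matrix.mul_assoc]
    _ = ν⁻¹ • J2 := by rw [hg', transpose_one, Matrix.one_mul, Matrix.mul_one]

theorem IsGSp4.transpose_mul_eq_transpose_mul {A B C D : Matrix (Fin 2) (Fin 2) ℚ}
    (h : IsGSp4 (blk A B C D)) : Aᵀ * C = Cᵀ * A := by
  obtain ⟨-, ν, -, h⟩ := h
  rw [transpose_blk_mul_J2_mul_blk, J2, smul_blk, blk_inj, smul_zero] at h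
  exact sub_eq_zero.mp h.1

def siegelBlock (i : Fin 4) : Bool := decide (2 ≤ i)

theorem memP_iff_blockTriangular {g : Matrix (Fin 4) (Fin 4) ℚ} :
    memP g ↔ IsGSp4 g ∧ g.BlockTriangular siegelBlock := by
  refine ⟨fun ⟨h, h20, h21, h30, h31⟩ => ⟨h, fun i j hij => ?_⟩,
    fun ⟨h, hg⟩ => ⟨h, hg (by decide), hg (by decide), hg (by decide), hg (by decide)⟩⟩
  fin_cases i <;> fin_cases j <;> first | assumption | exact absurd hij (by decide)

theorem memP.mul {a b : Matrix (Fin 4) (Fin 4) ℚ} (ha : memP a) (hb : memP b) : memP (a * b) := by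
  rw [memP_iff_blockTriangular] at *
  exact ⟨ha.1.mul hb.1, ha.2.mul hb.2⟩

theorem memP.nonsing_inv {g : Matrix (Fin 4) (Fin 4) ℚ} (h : memP g) : memP g⁻¹ := by
  rw [memP_iff_blockTriangular] at *
  have := h.1.1.invertible
  exact ⟨h.1.nonsing_inv, blockTriangular_inv_of_blockTriangular h.2⟩

theorem memP_blk {A B C D : Matrix (Fin 2) (Fin 2) ℚ} (h : IsGSp4 (blk A B C D)) (hC : C = 0) :
    memP (blk A B C D) := by
  subst hC
  exact ⟨h, rfl, rfl, rfl, rfl⟩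

theorem memP_blk_one_of_isSymm {S : Matrix (Fin 2) (Fin 2) ℚ} (hS : S.IsSymm) :
    memP (blk 1 S 0 1) := by
  refine memP_blk (isGSp4_of_transpose_mul_mul one_ne_zero ?_) rfl
  rw [transpose_blk_mul_J2_mul_blk, hS.eq, one_smul, J2]
  simp

theorem memP_blk_diag {A D : Matrix (Fin 2) (Fin 2) ℚ} (h : Aᵀ * D = 1) :
    memP (blk A 0 0 D) := by
  have h' : Dᵀ * A = 1 := by simpa using congrArg transpose h
  refine memP_blk (isGSp4_of_transpose_mul_mul one_ne_zero ?_) rfl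
  rw [transpose_blk_mul_J2_mul_blk, one_smul, J2]
  simp [h, h']

theorem memP_one : memP 1 := by
  simpa only [blk_one] using memP_blk_diag (A := 1) (D := 1) (by simp)

def MemDoubleCoset (w g : Matrix (Fin 4) (Fin 4) ℚ) : Prop :=
  ∃ p p' : Matrix (Fin 4) (Fin 4) ℚ, memP p ∧ memP p' ∧ g = p * w * p'

theorem MemDoubleCoset.of_mul_mul {w g q q' : Matrix (Fin 4) (Fin 4) ℚ} (hq : memP q)
    (hq' : memP q') (h : MemDoubleCoset w (q * g * q')) : MemDoubleCoset w g := by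
  obtain ⟨p, p', hp, hp', hg⟩ := h
  refine ⟨q⁻¹ * p, p' * q'⁻¹, hq.nonsing_inv.mul hp, hp'.mul hq'.nonsing_inv, ?_⟩
  have hq₁ : q⁻¹ * q = 1 := nonsing_inv_mul q ((isUnit_iff_isUnit_det q).mp hq.1.1)
  have hq₁' : q' * q'⁻¹ = 1 := mul_nonsing_inv q' ((isUnit_iff_isUnit_det q').mp hq'.1.1)
  calc g = q⁻¹ * (q * g * q') * q'⁻¹ := by
        simp only [Matrix.mul_assoc, hq₁', Matrix.mul_one, ← Matrix.mul_assoc q⁻¹, hq₁,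
          Matrix.one_mul]
    _ = q⁻¹ * p * w * (p' * q'⁻¹) := by rw [hg]; noncomm_ring

theorem memDoubleCoset_of_memP_mul {w w' g : Matrix (Fin 4) (Fin 4) ℚ} (hw : w * w' = 1)
    (h : memP (w' * g)) : MemDoubleCoset w g :=
  ⟨1, w' * g, memP_one, h, by rw [Matrix.one_mul, ← Matrix.mul_assoc, hw, Matrix.one_mul]⟩

theorem w4_eq_blk : w4 = blk 0 1 1 0 := by
  ext i j
  fin_cases i <;> fin_cases j <;> rfl

theorem w4_mul_w4 : w4 * w4 = 1 := by
  rw [w4_eq_blk, blk_mul, ← blk_one]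
  simp

theorem isGSp4_w4 : IsGSp4 w4 := by
  refine isGSp4_of_transpose_mul_mul (ν := -1) (by norm_num) ?_
  rw [w4_eq_blk, transpose_blk_mul_J2_mul_blk, J2, smul_blk]
  simp

theorem transpose_w2_eq_blk :
    w2ᵀ = blk !![0, 0; 0, 1] !![-1, 0; 0, 0] !![1, 0; 0, 0] !![0, 0; 0, 1] := by
  ext i j
  fin_cases i <;> fin_cases j <;> rfl

theorem w2_mul_transpose_w2 : w2 * w2ᵀ = 1 := by
  ext i j
  fin_cases i <;> fin_cases j <;> simp [w2, mul_apply, Fin.sum_univ_four]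

theorem isGSp4_transpose_w2 : IsGSp4 w2ᵀ := by
  refine isGSp4_of_transpose_mul_mul one_ne_zero ?_
  rw [transpose_w2_eq_blk, transpose_blk_mul_J2_mul_blk, J2, one_smul, blk_inj]
  refine ⟨?_, ?_, ?_, ?_⟩ <;> ext i j <;> fin_cases i <;> fin_cases j <;> simp [mul_apply]

theorem isSymm_mul_nonsing_inv {n K : Type*} [Fintype n] [DecidableEq n] [CommRing K]
    {A C : Matrix n n K} (h : Aᵀ * C = Cᵀ * A) (hC : IsUnit C.det) : (A * C⁻¹).IsSymm := by
  have hCt : IsUnit Cᵀ.det := by rwa [det_transpose]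
  calc (A * C⁻¹)ᵀ = (Cᵀ)⁻¹ * (Aᵀ * C) * C⁻¹ := by
        rw [transpose_mul, transpose_nonsing_inv, Matrix.mul_assoc,
          mul_nonsing_inv_cancel_right _ _ hC]
    _ = A * C⁻¹ := by
        rw [h, nonsing_inv_mul_cancel_left _ _ hCt]

theorem memDoubleCoset_w4_of_isUnit_det {A B C D : Matrix (Fin 2) (Fin 2) ℚ}
    (h : IsGSp4 (blk A B C D)) (hC : IsUnit C.det) : MemDoubleCoset w4 (blk A B C D) := by
  set S := A * C⁻¹
  have hn : memP (blk 1 (-S) 0 1) :=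
    memP_blk_one_of_isSymm (isSymm_mul_nonsing_inv h.transpose_mul_eq_transpose_mul hC).neg
  refine MemDoubleCoset.of_mul_mul hn memP_one (memDoubleCoset_of_memP_mul w4_mul_w4 ?_)
  have hw : w4 * (blk 1 (-S) 0 1 * blk A B C D * 1) = blk C D 0 (B - S * D) := by
    rw [Matrix.mul_one, w4_eq_blk, blk_mul, blk_mul]
    simp [S, nonsing_inv_mul_cancel_right _ _ hC, sub_eq_add_neg]
  rw [hw]
  exact memP_blk (hw ▸ isGSp4_w4.mul ((hn.1.mul h).mul memP_one.1)) rfl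

theorem exists_isUnit_det_mul_row_one_eq_zero {K : Type*} [Field K] [LinearOrder K]
    [IsStrictOrderedRing K] {M : Matrix (Fin 2) (Fin 2) K} (hM : M.det = 0) :
    ∃ U : Matrix (Fin 2) (Fin 2) K, IsUnit U.det ∧ (U * M) 1 = 0 := by
  obtain ⟨y, hy, hyM⟩ := exists_vecMul_eq_zero_iff.mpr hM
  -- complete the left null vector `y` to a matrix of determinant `y₀² + y₁² ≠ 0`
  refine ⟨!![y 1, -y 0; y 0, y 1], isUnit_iff_ne_zero.mpr ?_, ?_⟩
  · rw [det_fin_two_of, neg_mul, sub_neg_eq_add, Ne, mul_self_add_mul_self_eq_zero]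
    rintro ⟨h1, h0⟩
    exact hy (by ext i; fin_cases i <;> simp [h0, h1])
  · ext j
    simpa [mul_apply, vecMul, dotProduct, Fin.sum_univ_two] using congrFun hyM j

theorem exists_mul_mul_eq_of_det_eq_zero {K : Type*} [Field K] [LinearOrder K]
    [IsStrictOrderedRing K] {C : Matrix (Fin 2) (Fin 2) K} (hC : C ≠ 0) (hdet : C.det = 0) :
    ∃ U V : Matrix (Fin 2) (Fin 2) K, IsUnit U.det ∧ IsUnit V.det ∧
      ∃ c ≠ 0, U * C * V = !![c, 0; 0, 0] := by
  obtain ⟨U, hU, hUC⟩ := exists_isUnit_det_mul_row_one_eq_zero hdet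
  obtain ⟨V, hV, hVC⟩ := exists_isUnit_det_mul_row_one_eq_zero (M := (U * C)ᵀ)
    (by rw [det_transpose, det_mul, hdet, mul_zero])
  have hVt : IsUnit Vᵀ.det := by rwa [det_transpose]
  have hrow : ∀ j, (U * C * Vᵀ) 1 j = 0 := fun j => by
    simp [Matrix.mul_apply, congrFun hUC]
  have hcol : ∀ i, (U * C * Vᵀ) i 1 = 0 := fun i => by
    simpa [Matrix.mul_apply, mul_comm] using congrFun hVC i
  have hN : U * C * Vᵀ = !![(U * C * Vᵀ) 0 0, 0; 0, 0] := by
    ext i j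
    fin_cases i <;> fin_cases j <;> simp [hrow, hcol]
  refine ⟨U, Vᵀ, hU, hVt, _, fun hc => hC ?_, hN⟩
  have hN0 : U * C * Vᵀ = 0 := by
    rw [hN, hc]
    ext i j
    fin_cases i <;> fin_cases j <;> rfl
  calc C = U⁻¹ * (U * C * Vᵀ * Vᵀ⁻¹) := by
        rw [mul_nonsing_inv_cancel_right _ _ hVt, nonsing_inv_mul_cancel_left _ _ hU]
    _ = 0 := by rw [hN0, Matrix.zero_mul, Matrix.mul_zero]

theorem memDoubleCoset_w2_of_eq_diag {A B D : Matrix (Fin 2) (Fin 2) ℚ} {c : ℚ} (hc : c ≠ 0)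
    (h : IsGSp4 (blk A B !![c, 0; 0, 0] D)) : MemDoubleCoset w2 (blk A B !![c, 0; 0, 0] D) := by
  have hA : A 0 1 = 0 := by
    simpa [mul_apply, Fin.sum_univ_two, hc] using
      congrFun (congrFun h.transpose_mul_eq_transpose_mul 1) 0
  set S : Matrix (Fin 2) (Fin 2) ℚ := !![A 0 0 / c, 0; 0, 0]
  have hn : memP (blk 1 (-S) 0 1) :=
    memP_blk_one_of_isSymm (IsSymm.neg (by ext i j; fin_cases i <;> fin_cases j <;> rfl))
  refine MemDoubleCoset.of_mul_mul hn memP_one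
    (memDoubleCoset_of_memP_mul w2_mul_transpose_w2 ?_)
  have hg := isGSp4_transpose_w2.mul ((hn.1.mul h).mul memP_one.1)
  rw [Matrix.mul_one, transpose_w2_eq_blk, blk_mul, blk_mul] at hg ⊢
  refine memP_blk hg ?_
  ext i j
  fin_cases i <;> fin_cases j <;> simp [S, vecMul, dotProduct, Fin.sum_univ_two, hc, hA]

theorem memDoubleCoset_w2_of_det_eq_zero {A B C D : Matrix (Fin 2) (Fin 2) ℚ}
    (h : IsGSp4 (blk A B C D)) (hC : C ≠ 0) (hdet : C.det = 0) :
    MemDoubleCoset w2 (blk A B C D) := by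
  obtain ⟨U, V, hU, hV, c, hc, hUCV⟩ := exists_mul_mul_eq_of_det_eq_zero hC hdet
  have hq : memP (blk U⁻¹ᵀ 0 0 U) :=
    memP_blk_diag (by rw [transpose_transpose, nonsing_inv_mul _ hU])
  have hq' : memP (blk V 0 0 V⁻¹ᵀ) :=
    memP_blk_diag (by rw [← transpose_mul, nonsing_inv_mul _ hV, transpose_one])
  refine MemDoubleCoset.of_mul_mul hq hq' ?_
  have hg := (hq.1.mul h).mul hq'.1
  rw [blk_diag_mul_blk_mul_blk_diag, hUCV] at hg ⊢
  exact memDoubleCoset_w2_of_eq_diag hc hg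

theorem memDoubleCoset_w1_of_memP {g : Matrix (Fin 4) (Fin 4) ℚ} (h : memP g) :
    MemDoubleCoset w1 g :=
  memDoubleCoset_of_memP_mul (w' := 1) (Matrix.mul_one _) (by rwa [Matrix.one_mul])

/-- Every element of `GSp₄(ℚ)` lies in `P(ℚ)·wⱼ·P(ℚ)` for some `j ∈ {1, 2, 3, 4}`. -/
theorem stmt5 (g : Matrix (Fin 4) (Fin 4) ℚ) (hg : IsGSp4 g) :
    ∃ w ∈ ({w1, w2, w3, w4} : Set (Matrix (Fin 4) (Fin 4) ℚ)),
      ∃ p p' : Matrix (Fin 4) (Fin 4) ℚ, memP p ∧ memP p' ∧ g = p * w * p' := by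
  obtain ⟨A, B, C, D, rfl⟩ := exists_eq_blk g
  by_cases hC : C = 0
  · exact ⟨w1, by simp, memDoubleCoset_w1_of_memP (memP_blk hg hC)⟩
  by_cases hdet : C.det = 0
  · exact ⟨w2, by simp, memDoubleCoset_w2_of_det_eq_zero hg hC hdet⟩
  · exact ⟨w4, by simp, memDoubleCoset_w4_of_isUnit_det hg (isUnit_iff_ne_zero.mpr hdet)⟩

end
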